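/- Let V be a real M×N matrix of full column rank N, G(w) := Vᵀ·diag(w)·V, and E(w) := −(1/N)·log(det G(w)) + Σᵢ wᵢ. Let w* ∈ ℝ^M satisfy: w*ᵢ ≥ 0 for all i, G(w*) is positive definite, ∂E/∂wᵢ(w*) = 0 for every i with w*ᵢ > 0, and ∂E/∂wᵢ(w*) ≥ 0 for every i with w*ᵢ = 0. Then w* minimizes E over the nonnegative orthant {w ∈ ℝ^M : wᵢ ≥ 0 for all i}. -/

import Mathlib

/-!
The map `w ↦ log det G(w)` is concave on the positive definite region, with partial derivatives
the leverages `cᵢ(w) = (V G(w)⁻¹ Vᵀ)ᵢᵢ`: writing `C = G(w₀)^{-1/2} G(w) G(w₀)^{-1/2}`, the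
inequality `log λ ≤ λ - 1` on the eigenvalues of `C` gives
`log det G(w) ≤ log det G(w₀) + tr (G(w₀)⁻¹ G(w)) - N = log det G(w₀) + ∑ (wᵢ - w₀ᵢ) cᵢ(w₀)`.
Hence `E(w) ≥ E(w₀) + ∑ (wᵢ - w₀ᵢ) ∂ᵢE(w₀)`, and the KKT conditions make every summand
nonnegative. The partial derivatives themselves come from the matrix determinant lemma
`det G(w + t eᵢ) = det G(w) (1 + t cᵢ(w))`.
-/

open Matrix

namespace Matrix

section

variable {n : Type*} [Fintype n] [DecidableEq n]

theorem PosDef.log_det_le_trace_sub_card {A : Matrix n n ℝ} (hA : A.PosDef) :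
    Real.log A.det ≤ A.trace - Fintype.card n := by
  have hpos := hA.eigenvalues_pos
  rw [hA.1.det_eq_prod_eigenvalues, hA.1.trace_eq_sum_eigenvalues]
  simp only [RCLike.ofReal_real_eq_id, id_eq]
  rw [Real.log_prod fun i _ => (hpos i).ne']
  calc ∑ i, Real.log (hA.1.eigenvalues i) ≤ ∑ i, (hA.1.eigenvalues i - 1) :=
        Finset.sum_le_sum fun i _ => Real.log_le_sub_one_of_pos (hpos i)
    _ = _ := by simp [Finset.sum_sub_distrib]

theorem PosDef.log_det_le_log_det_add_trace {A B : Matrix n n ℝ} (hA : A.PosDef)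
    (hB : B.PosDef) :
    Real.log B.det ≤ Real.log A.det + ((A⁻¹ * B).trace - Fintype.card n) := by
  open scoped MatrixOrder in
  set T := CFC.sqrt A⁻¹
  have hT : T.PosSemidef := (CFC.sqrt_nonneg _).posSemidef
  have hTT : T * T = A⁻¹ := CFC.sqrt_mul_sqrt_self _ hA.inv.posSemidef.nonneg
  have hdetA : A.det ≠ 0 := hA.det_pos.ne'
  have hdetT : T.det * T.det = A.det⁻¹ := by
    rw [← det_mul, hTT, det_nonsing_inv, Ring.inverse_eq_inv]
  have hC : (T * B * T).PosDef := by
    have hTunit : IsUnit T :=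
      (isUnit_iff_isUnit_det T).2 (left_ne_zero_of_mul (hdetT ▸ inv_ne_zero hdetA)).isUnit
    simpa only [hT.1.eq] using hB.conjTranspose_mul_mul_same (mulVec_injective_of_isUnit hTunit)
  have hdetC : Real.log (T * B * T).det = Real.log B.det - Real.log A.det := by
    rw [det_mul, det_mul, mul_comm _ B.det, mul_assoc, hdetT,
      Real.log_mul hB.det_pos.ne' (inv_ne_zero hdetA), Real.log_inv]
    ring
  have htrC : (T * B * T).trace = (A⁻¹ * B).trace := by
    rw [trace_mul_comm, ← mul_assoc, hTT]
  have := hC.log_det_le_trace_sub_card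
  rw [hdetC, htrC] at this
  linarith

theorem differentiable_det_of_entries {𝕜 E : Type*} [NontriviallyNormedField 𝕜]
    [NormedAddCommGroup E] [NormedSpace 𝕜 E] {A : E → Matrix n n 𝕜}
    (hA : ∀ i j, Differentiable 𝕜 fun x => A x i j) : Differentiable 𝕜 fun x => (A x).det := by
  simp_rw [det_apply']
  fun_prop

end

variable {m n R : Type*} [Fintype m] [DecidableEq m]

section CommRing

variable [CommRing R] (V : Matrix m n R)

def weightedGram (w : m → R) : Matrix n n R := Vᵀ * diagonal w * V

noncomputable def leverage [Fintype n] [DecidableEq n] (w : m → R) (i : m) : R :=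
  (V * (weightedGram V w)⁻¹ * Vᵀ) i i

theorem weightedGram_apply (w : m → R) (a b : n) :
    weightedGram V w a b = ∑ k, V k a * w k * V k b := by
  simp [weightedGram, mul_apply, diagonal_apply]

theorem trace_mul_weightedGram [Fintype n] (A : Matrix n n R) (w : m → R) :
    (A * weightedGram V w).trace = ∑ i, w i * (V * A * Vᵀ) i i := by
  rw [weightedGram, ← Matrix.mul_assoc, ← Matrix.mul_assoc, trace_mul_comm, ← Matrix.mul_assoc,
    ← Matrix.mul_assoc, trace_mul_comm]
  simp [trace]

theorem weightedGram_add (w w' : m → R) :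
    weightedGram V (w + w') = weightedGram V w + weightedGram V w' := by
  rw [weightedGram, weightedGram, weightedGram, ← Matrix.add_mul, ← Matrix.mul_add, diagonal_add]
  rfl

theorem weightedGram_single (i : m) (t : R) :
    weightedGram V (Pi.single i t) = replicateCol Unit (V i) * replicateRow Unit (t • V i) := by
  ext a b
  simp [weightedGram_apply, Pi.single_apply, mul_apply, mul_left_comm, mul_comm]

theorem det_weightedGram_add_single [Fintype n] [DecidableEq n] {w : m → R}
    (hw : IsUnit (weightedGram V w).det) (i : m) (t : R) :
    (weightedGram V (w + Pi.single i t)).det =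
      (weightedGram V w).det * (1 + t * leverage V w i) := by
  rw [weightedGram_add, weightedGram_single, det_add_replicateCol_mul_replicateRow hw, det_unique (n := Unit)]
  simp [leverage, mul_apply, Finset.mul_sum]

end CommRing

section Real

variable [Fintype n] (V : Matrix m n ℝ)

theorem posSemidef_weightedGram {w : m → ℝ} (hw : 0 ≤ w) : (weightedGram V w).PosSemidef := by
  simpa [weightedGram] using (posSemidef_diagonal_iff.2 hw).conjTranspose_mul_mul_same V

variable [DecidableEq n]

theorem differentiable_det_weightedGram : Differentiable ℝ fun w => (weightedGram V w).det :=
  differentiable_det_of_entries fun a b => by simp_rw [weightedGram_apply]; fun_prop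

theorem hasLineDerivAt_log_det_weightedGram {w : m → ℝ} (hw : (weightedGram V w).det ≠ 0)
    (i : m) :
    HasLineDerivAt ℝ (fun w => Real.log (weightedGram V w).det) (leverage V w i) w
      (Pi.single i 1) := by
  have hline : ∀ t : ℝ, (weightedGram V (w + t • Pi.single i 1)).det =
      (weightedGram V w).det * (1 + t * leverage V w i) := fun t => by
    rw [← Pi.single_smul, smul_eq_mul, mul_one, det_weightedGram_add_single V hw.isUnit]
  have hlog := ((((hasDerivAt_id (0 : ℝ)).mul_const (leverage V w i)).const_add 1).const_mul
    (weightedGram V w).det).log (by simpa using hw)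
  simp only [id, zero_mul, add_zero, mul_one, one_mul, mul_div_cancel_left₀ _ hw] at hlog
  simpa only [HasLineDerivAt, hline] using hlog

theorem sum_mul_leverage {w : m → ℝ} (hw : IsUnit (weightedGram V w).det) :
    ∑ i, w i * leverage V w i = Fintype.card n := by
  simp [leverage, ← trace_mul_weightedGram, nonsing_inv_mul _ hw]

theorem log_det_weightedGram_le {w₀ w : m → ℝ} (hw₀ : (weightedGram V w₀).PosDef)
    (hw : (weightedGram V w).PosDef) :
    Real.log (weightedGram V w).det ≤
      Real.log (weightedGram V w₀).det + ∑ i, (w i - w₀ i) * leverage V w₀ i := by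
  have htrace : ((weightedGram V w₀)⁻¹ * weightedGram V w).trace =
      ∑ i, w i * leverage V w₀ i := trace_mul_weightedGram V _ w
  have := hw₀.log_det_le_log_det_add_trace hw
  rw [htrace, ← sum_mul_leverage V hw₀.det_pos.ne'.isUnit, ← Finset.sum_sub_distrib] at this
  simpa only [sub_mul] using this

end Real

end Matrix

section DesignEnergy

variable {m n : Type*} [Fintype m] [DecidableEq m] [Fintype n] [DecidableEq n]
  (V : Matrix m n ℝ)

noncomputable def designEnergy (w : m → ℝ) : ℝ :=
  -(1 / (Fintype.card n : ℝ)) * Real.log (weightedGram V w).det + ∑ i, w i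

theorem fderiv_designEnergy_single {w : m → ℝ} (hw : (weightedGram V w).det ≠ 0) (i : m) :
    fderiv ℝ (designEnergy V) w (Pi.single i 1) = 1 - leverage V w i / Fintype.card n := by
  have hdiff : DifferentiableAt ℝ (designEnergy V) w := by
    unfold designEnergy
    have := (differentiable_det_weightedGram V w).log hw
    fun_prop
  have hsum : HasLineDerivAt ℝ (fun w : m → ℝ => ∑ j, w j) 1 w (Pi.single i 1) := by
    simpa [HasLineDerivAt, Finset.sum_add_distrib, ← Finset.mul_sum] using
      (hasDerivAt_id (0 : ℝ)).const_add (∑ j, w j)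
  have hline : HasLineDerivAt ℝ (designEnergy V)
      (-(1 / (Fintype.card n : ℝ)) * leverage V w i + 1) w (Pi.single i 1) :=
    ((hasLineDerivAt_log_det_weightedGram V hw i).const_mul _).add hsum
  rw [← hdiff.lineDeriv_eq_fderiv, hline.lineDeriv]
  ring

theorem designEnergy_add_sum_le {w₀ w : m → ℝ} (hw₀ : (weightedGram V w₀).PosDef)
    (hw : (weightedGram V w).PosDef) :
    designEnergy V w₀ + ∑ i, (w i - w₀ i) * (1 - leverage V w₀ i / Fintype.card n) ≤
      designEnergy V w := by
  have hlog := log_det_weightedGram_le V hw₀ hw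
  have hcoeff : 0 ≤ 1 / (Fintype.card n : ℝ) := by positivity
  have hsum : ∑ i, (w i - w₀ i) * (1 - leverage V w₀ i / Fintype.card n) =
      ∑ i, w i - ∑ i, w₀ i - 1 / (Fintype.card n : ℝ) * ∑ i, (w i - w₀ i) * leverage V w₀ i := by
    rw [Finset.mul_sum, ← Finset.sum_sub_distrib, ← Finset.sum_sub_distrib]
    exact Finset.sum_congr rfl fun i _ => by ring
  rw [designEnergy, designEnergy, hsum]
  nlinarith [mul_le_mul_of_nonneg_left hlog hcoeff]

end DesignEnergy

theorem stmt_16_general (M N : ℕ)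
    (V : Matrix (Fin M) (Fin N) ℝ)
    (G : (Fin M → ℝ) → Matrix (Fin N) (Fin N) ℝ)
    (hG : ∀ w, G w = Vᵀ * diagonal w * V)
    (E : (Fin M → ℝ) → ℝ)
    (hE : ∀ w, E w = -(1 / (N : ℝ)) * Real.log (G w).det + ∑ i, w i)
    (w₀ : Fin M → ℝ)
    (h1 : ∀ i, 0 ≤ w₀ i) (h2 : (G w₀).PosDef)
    (h3 : ∀ i, 0 < w₀ i → fderiv ℝ E w₀ (Pi.single i 1) = 0)
    (h4 : ∀ i, w₀ i = 0 → 0 ≤ fderiv ℝ E w₀ (Pi.single i 1)) :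
    IsMinOn E {w : Fin M → ℝ | (∀ i, 0 ≤ w i) ∧ 0 < (G w).det} w₀ := by
  obtain rfl : G = weightedGram V := funext hG
  obtain rfl : E = designEnergy V := funext fun w => by simp [hE, designEnergy]
  have hderiv := fderiv_designEnergy_single V h2.det_pos.ne'
  refine isMinOn_iff.2 fun w ⟨hw_nonneg, hw_det⟩ => ?_
  have hw : (weightedGram V w).PosDef :=
    (posSemidef_weightedGram V hw_nonneg).posDef_iff_det_ne_zero.2 hw_det.ne'
  refine le_trans (le_add_of_nonneg_right (Finset.sum_nonneg fun i _ => ?_))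
    (designEnergy_add_sum_le V h2 hw)
  rw [← hderiv]
  rcases (h1 i).eq_or_lt with hi | hi
  · rw [← hi, sub_zero]
    exact mul_nonneg (hw_nonneg i) (h4 i hi.symm)
  · rw [h3 i hi, mul_zero]

theorem stmt_16 (M N : ℕ) (hN : 0 < N) (hMN : N ≤ M)
    (V : Matrix (Fin M) (Fin N) ℝ) (hV : V.rank = N)
    (G : (Fin M → ℝ) → Matrix (Fin N) (Fin N) ℝ)
    (hG : ∀ w, G w = Vᵀ * diagonal w * V)
    (E : (Fin M → ℝ) → ℝ)
    (hE : ∀ w, E w = -(1 / (N : ℝ)) * Real.log (G w).det + ∑ i, w i)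
    (w₀ : Fin M → ℝ)
    (h1 : ∀ i, 0 ≤ w₀ i) (h2 : (G w₀).PosDef)
    (h3 : ∀ i, 0 < w₀ i → fderiv ℝ E w₀ (Pi.single i 1) = 0)
    (h4 : ∀ i, w₀ i = 0 → 0 ≤ fderiv ℝ E w₀ (Pi.single i 1)) :
    IsMinOn E {w : Fin M → ℝ | (∀ i, 0 ≤ w i) ∧ 0 < (G w).det} w₀ :=
  stmt_16_general M N V G hG E hE w₀ h1 h2 h3 h4
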